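/- arXiv:2206.08435 — 5 statements merged into one kernel-verified Lean document; each statement's English description precedes it below -/
import Mathlib

section
/- Let f : [0,1]^p → ℝ be continuously differentiable, and suppose for each coordinate j the partial derivative ∂f/∂u_j does not depend on u_j. Then the supremum of f over the cube [0,1]^p equals the maximum of f over the vertex set {0,1}^p. -/
/-- Along a coordinate line, `f` is dominated by its values at the endpoints `0` and `1`. -/
lemma key_coord (p : ℕ) (f : (Fin p → ℝ) → ℝ)
    (hf : ContDiff ℝ 1 f)
    (hpart : ∀ (j : Fin p) (u v : Fin p → ℝ), (∀ i, i ≠ j → u i = v i) →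
      fderiv ℝ f u (Pi.single j 1) = fderiv ℝ f v (Pi.single j 1))
    (j : Fin p) (x : Fin p → ℝ) (hx : x j ∈ Set.Icc (0 : ℝ) 1) :
    f x ≤ max (f (Function.update x j 0)) (f (Function.update x j 1)) := by
  set e : Fin p → ℝ := Pi.single j 1 with he
  set c : Fin p → ℝ := Function.update x j 0 with hc
  have hline : ∀ t : ℝ, Function.update x j t = c + t • e := by
    intro t; funext i
    by_cases h : i = j
    · subst h; simp [hc, he]
    · simp [hc, he, Function.update_of_ne h, Pi.single_eq_of_ne h]
  set g : ℝ → ℝ := fun t => f (c + t • e) with hg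
  set C : ℝ := fderiv ℝ f c e with hCdef
  have hgderiv : ∀ t : ℝ, HasDerivAt g C t := by
    intro t
    have h1 : HasDerivAt (fun t : ℝ => c + t • e) e t := by
      simpa using ((hasDerivAt_id t).smul_const e).const_add c
    have h2 := ((hf.differentiable one_ne_zero).differentiableAt.hasFDerivAt
      (x := c + t • e)).comp_hasDerivAt t h1
    have h3 : fderiv ℝ f (c + t • e) e = C := by
      rw [hCdef, he]
      apply hpart j
      intro i hi
      simp [he, Pi.single_eq_of_ne hi]
    rw [h3] at h2
    exact h2
  have haff : ∀ t : ℝ, g t = g 0 + C * t := by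
    intro t
    have hdiff : Differentiable ℝ (fun t => g t - C * t) := by
      intro s
      exact ((hgderiv s).sub ((hasDerivAt_id s).const_mul C)).differentiableAt
    have hzero : ∀ s : ℝ, deriv (fun t => g t - C * t) s = 0 := by
      intro s
      have := ((hgderiv s).sub (((hasDerivAt_id s).const_mul C)))
      have h2 := this.deriv
      simp at h2
      exact h2
    have hconst := is_const_of_deriv_eq_zero hdiff hzero t 0
    simp only [mul_zero, sub_zero] at hconst
    linarith [hconst]
  have hx0 : f (Function.update x j 0) = g 0 := by rw [hg]; rw [hline 0]
  have hx1 : f (Function.update x j 1) = g 1 := by rw [hg]; rw [hline 1]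
  have hxx : f x = g (x j) := by
    show f x = f (c + x j • e)
    rw [← hline (x j), Function.update_eq_self]
  rw [hxx, hx0, hx1, haff (x j), haff 1]
  obtain ⟨h0, h1⟩ := hx
  rcases le_or_gt 0 C with hC | hC
  · have : C * x j ≤ C * 1 := by nlinarith
    exact le_max_of_le_right (by linarith)
  · have : C * x j ≤ 0 := by nlinarith
    exact le_max_of_le_left (by linarith)

lemma push_to_vertex (p : ℕ) (f : (Fin p → ℝ) → ℝ)
    (hf : ContDiff ℝ 1 f)
    (hpart : ∀ (j : Fin p) (u v : Fin p → ℝ), (∀ i, i ≠ j → u i = v i) →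
      fderiv ℝ f u (Pi.single j 1) = fderiv ℝ f v (Pi.single j 1)) :
    ∀ (s : Finset (Fin p)) (x : Fin p → ℝ), (∀ i, x i ∈ Set.Icc (0 : ℝ) 1) →
      (∀ i, i ∉ s → x i = 0 ∨ x i = 1) →
      ∃ u : Fin p → ℝ, (∀ i, u i = 0 ∨ u i = 1) ∧ f x ≤ f u := by
  intro s
  induction s using Finset.induction_on with
  | empty =>
    intro x hx hvert
    exact ⟨x, fun i => hvert i (Finset.notMem_empty i), le_rfl⟩
  | @insert j s' hj ih =>
    intro x hx hvert
    have hkey := key_coord p f hf hpart j x (hx j)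
    have step : ∀ t : ℝ, (t = 0 ∨ t = 1) →
        ∃ u : Fin p → ℝ, (∀ i, u i = 0 ∨ u i = 1) ∧ f (Function.update x j t) ≤ f u := by
      intro t ht
      apply ih
      · intro i
        by_cases h : i = j
        · subst h
          rw [Function.update_self]
          rcases ht with h | h <;> rw [h]
          · exact ⟨le_rfl, zero_le_one⟩
          · exact ⟨zero_le_one, le_rfl⟩
        · rw [Function.update_of_ne h]; exact hx i
      · intro i hi
        by_cases h : i = j
        · subst h; simpa using ht
        · rw [Function.update_of_ne h]
          exact hvert i (by simp [h, hi])
    rcases le_total (f (Function.update x j 0)) (f (Function.update x j 1)) with h | h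
    · obtain ⟨u, hu, hle⟩ := step 1 (Or.inr rfl)
      exact ⟨u, hu, le_trans (hkey.trans (max_le h le_rfl)) hle⟩
    · obtain ⟨u, hu, hle⟩ := step 0 (Or.inl rfl)
      exact ⟨u, hu, le_trans (hkey.trans (max_le le_rfl h)) hle⟩

/-- Let `f : [0,1]^p → ℝ` be continuously differentiable and suppose that for
each coordinate `j` the partial derivative `∂f/∂u_j` does not depend on `u_j`.  Then the
supremum of `f` over the cube `[0,1]^p` equals the maximum of `f` over the vertex set
`{0,1}^p`: there is a vertex at which `f` attains the greatest value over the cube. -/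
theorem sup_cube_eq_max_vertices (p : ℕ) (f : (Fin p → ℝ) → ℝ)
    (hf : ContDiff ℝ 1 f)
    (hpart : ∀ (j : Fin p) (u v : Fin p → ℝ), (∀ i, i ≠ j → u i = v i) →
      fderiv ℝ f u (Pi.single j 1) = fderiv ℝ f v (Pi.single j 1)) :
    ∃ u : Fin p → ℝ, (∀ i, u i = 0 ∨ u i = 1) ∧
      IsGreatest (f '' {w | ∀ i, w i ∈ Set.Icc (0 : ℝ) 1}) (f u) := by
  set K : Set (Fin p → ℝ) := {w | ∀ i, w i ∈ Set.Icc (0 : ℝ) 1} with hK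
  have hKeq : K = Set.univ.pi fun _ => Set.Icc (0 : ℝ) 1 := by
    ext w; simp [hK, Set.mem_pi, Pi.le_def, forall_and, Set.mem_Icc]
  have hKcomp : IsCompact K := by
    rw [hKeq]; exact isCompact_univ_pi fun _ => isCompact_Icc
  have hKne : K.Nonempty := ⟨fun _ => 0, fun i => ⟨le_rfl, zero_le_one⟩⟩
  obtain ⟨x, hxK, hxmax⟩ := hKcomp.exists_isMaxOn hKne hf.continuous.continuousOn
  obtain ⟨u, hu, hle⟩ := push_to_vertex p f hf hpart Finset.univ x hxK
    (fun i hi => absurd (Finset.mem_univ i) hi)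
  refine ⟨u, hu, ⟨u, fun i => ?_, rfl⟩, ?_⟩
  · rcases hu i with h | h <;> rw [h]
    · exact ⟨le_rfl, zero_le_one⟩
    · exact ⟨zero_le_one, le_rfl⟩
  · rintro y ⟨w, hw, rfl⟩
    exact le_trans (hxmax hw) hle
end

section
/- Let r̃ : S_o → ℝ be entrywise increasing and appending increasing, let α ∈ ℝ with r̃(∅) ≤ α, and define I(u) = sup{n ∈ {0,...,dim(u)} : r̃((u_1,...,u_n)) ≤ α} and J(u) = (u_1,...,u_{I(u)}) (with J(u) = ∅ if I(u) = 0). Then J is increasing with respect to the partial order ≼ on S_o: u ≼ v implies J(u) ≼ J(v). -/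
/-- Membership in the space `S_o`: weakly increasing `[0,1]`-valued sequences (as lists) of
length at most `K`; the empty list represents `∅`. -/
def SoMem (K : ℕ) (l : List ℝ) : Prop :=
  l.length ≤ K ∧ l.Pairwise (· ≤ ·) ∧ ∀ x ∈ l, x ∈ Set.Icc (0 : ℝ) 1

/-- The partial order `u ≼ v` on `S_o`: `dim u ≥ dim v` and `u_i ≤ v_i` for `i ≤ dim v`. -/
def Prec (u v : List ℝ) : Prop :=
  v.length ≤ u.length ∧ ∀ i < v.length, u.getD i 0 ≤ v.getD i 0

/-- `I(u) = sup {n ∈ {0,…,dim u} : r̃(u₁,…,u_n) ≤ α}` (the `ℕ`-supremum of this set). -/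
noncomputable def Ifun (r : List ℝ → ℝ) (α : ℝ) (u : List ℝ) : ℕ :=
  sSup {n | n ≤ u.length ∧ r (u.take n) ≤ α}

/-- `J(u) = (u₁,…,u_{I(u)})`, with `J(u) = ∅ when I(u) = 0`. -/
noncomputable def Jfun (r : List ℝ → ℝ) (α : ℝ) (u : List ℝ) : List ℝ :=
  u.take (Ifun r α u)

lemma SoMem_take {K : ℕ} {l : List ℝ} (h : SoMem K l) (n : ℕ) : SoMem K (l.take n) := by
  obtain ⟨h1, h2, h3⟩ := h
  refine ⟨le_trans (by simp : (l.take n).length ≤ l.length) h1, h2.sublist (l.take_sublist n), ?_⟩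
  exact fun x hx => h3 x ((l.take_sublist n).mem hx)

lemma Ifun_mem (r : List ℝ → ℝ) (α : ℝ) (u : List ℝ) (hα : r [] ≤ α) :
    Ifun r α u ≤ u.length ∧ r (u.take (Ifun r α u)) ≤ α := by
  have hne : ({n | n ≤ u.length ∧ r (u.take n) ≤ α}).Nonempty :=
    ⟨0, Nat.zero_le _, by simpa using hα⟩
  have hbdd : BddAbove {n | n ≤ u.length ∧ r (u.take n) ≤ α} :=
    ⟨u.length, fun n hn => hn.1⟩
  exact Nat.sSup_mem hne hbdd

/-- If `r̃ : S_o → ℝ` is entrywise increasing and appending increasing and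
`r̃(∅) ≤ α`, then the map `J` is increasing with respect to the partial order `≼`:
`u ≼ v` implies `J(u) ≼ J(v)`. -/
theorem Jfun_increasing (K : ℕ) (r : List ℝ → ℝ) (α : ℝ)
    (hEnt : ∀ u v : List ℝ, SoMem K u → SoMem K v → u.length = v.length →
      (∀ i < u.length, u.getD i 0 ≤ v.getD i 0) → r u ≤ r v)
    (hApp : ∀ u : List ℝ, SoMem K u → ∀ k : ℕ, r (u.take k) ≤ r u)
    (hα : r [] ≤ α)
    (u v : List ℝ) (hu : SoMem K u) (hv : SoMem K v) (huv : Prec u v) :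
    Prec (Jfun r α u) (Jfun r α v) := by
  obtain ⟨hlen, hent⟩ := huv
  obtain ⟨hIu_le, hru⟩ := Ifun_mem r α u hα
  obtain ⟨hIv_le, hrv⟩ := Ifun_mem r α v hα
  -- key: Ifun r α v ≤ Ifun r α u
  have hsub : ∀ (w : List ℝ) (n : ℕ), n ≤ w.length → (w.take n).length = n :=
    fun w n hn => by simp [List.length_take, Nat.min_eq_left hn]
  have hkey : Ifun r α v ≤ Ifun r α u := by
    have hbdd : BddAbove {n | n ≤ u.length ∧ r (u.take n) ≤ α} :=
      ⟨u.length, fun n hn => hn.1⟩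
    apply le_csSup hbdd
    refine ⟨le_trans hIv_le hlen, ?_⟩
    have h1 : r (u.take (Ifun r α v)) ≤ r (v.take (Ifun r α v)) := by
      apply hEnt _ _ (SoMem_take hu _) (SoMem_take hv _)
      · rw [hsub u _ (le_trans hIv_le hlen), hsub v _ hIv_le]
      · intro i hi
        rw [hsub u _ (le_trans hIv_le hlen)] at hi
        have hiv : i < v.length := lt_of_lt_of_le hi hIv_le
        simp only [List.getD_eq_getElem?_getD, List.getElem?_take, hi, if_pos]
        rw [← List.getD_eq_getElem?_getD, ← List.getD_eq_getElem?_getD]; exact hent i hiv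
    exact le_trans h1 hrv
  constructor
  · rw [Jfun, Jfun, hsub u _ hIu_le, hsub v _ hIv_le]; exact hkey
  · intro i hi
    rw [Jfun, hsub v _ hIv_le] at hi
    have hiu : i < Ifun r α u := lt_of_lt_of_le hi hkey
    simp only [Jfun, List.getD_eq_getElem?_getD, List.getElem?_take, hi, hiu, if_pos]
    rw [← List.getD_eq_getElem?_getD, ← List.getD_eq_getElem?_getD]; exact hent i (lt_of_lt_of_le hi hIv_le)
end

section
/- With S_o, r̃, α, I, J as above (r̃ entrywise increasing and appending increasing, r̃(∅) ≤ α), let u = (u_1,...,u_m) ∈ [0,1]^m and let u' = (u_{k_1},...,u_{k_l}) be any nonempty subvector (distinct indices k_1,...,k_l ∈ {1,...,m}) with r̃([u']) ≤ α, where [·] denotes the sorted (nondecreasing) rearrangement. Then J([u]) ≼ [u']. Moreover, if J([u]) = ∅ then no nonempty subvector u' of u satisfies r̃([u']) ≤ α. -/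
/-- `[w]`: the nondecreasing rearrangement (order statistic) of the vector `w`. -/
noncomputable def sortR (l : List ℝ) : List ℝ := l.insertionSort (· ≤ ·)

open List in
lemma mySortedSublistGetD {s t : List ℝ}
    (hst : s <+ t) (ht : t.Pairwise (· ≤ ·)) :
    ∀ i < s.length, t.getD i 0 ≤ s.getD i 0 := by
  obtain ⟨f, hf⟩ := List.sublist_iff_exists_orderEmbedding_getElem?_eq.1 hst
  intro i hi
  have hle : i ≤ f i := f.strictMono.le_apply
  have h1 : s[i]? = some s[i] := List.getElem?_eq_getElem hi
  have h2 : t[f i]? = some s[i] := (hf i).symm.trans h1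
  rw [List.getElem?_eq_some_iff] at h2
  obtain ⟨hfi, hget⟩ := h2
  have hit : i < t.length := lt_of_le_of_lt hle hfi
  have hmono : t[i] ≤ t[f i] :=
    List.Pairwise.rel_get_of_le ht (a := ⟨i, hit⟩) (b := ⟨f i, hfi⟩) (Fin.mk_le_mk.mpr hle)
  rw [List.getD_eq_getElem _ _ hit, List.getD_eq_getElem _ _ hi]
  calc t[i] ≤ t[f i] := hmono
    _ = s[i] := by simpa using hget

/-- With `r̃` entrywise increasing and appending increasing and `r̃(∅) ≤ α`,
let `u ∈ [0,1]^m` and let `u' = (u_{k₁},…,u_{k_l})` be any nonempty subvector with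
`r̃([u']) ≤ α`.  Then `J([u]) ≼ [u']`.  Moreover, if `J([u]) = ∅`, then no nonempty subvector
`u'` of `u` satisfies `r̃([u']) ≤ α`. -/

theorem Jfun_dominates_subvectors (m : ℕ) (r : List ℝ → ℝ) (α : ℝ)
    (hEnt : ∀ u v : List ℝ, SoMem m u → SoMem m v → u.length = v.length →
      (∀ i < u.length, u.getD i 0 ≤ v.getD i 0) → r u ≤ r v)
    (hApp : ∀ u : List ℝ, SoMem m u → ∀ k : ℕ, r (u.take k) ≤ r u)
    (hα : r [] ≤ α)
    (u : List ℝ) (hlen : u.length = m) (hmem : ∀ x ∈ u, x ∈ Set.Icc (0 : ℝ) 1) :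
    (∀ (l : ℕ) (k : Fin l → Fin u.length), Function.Injective k → 0 < l →
      r (sortR (List.ofFn fun i => u.get (k i))) ≤ α →
      Prec (Jfun r α (sortR u)) (sortR (List.ofFn fun i => u.get (k i)))) ∧
    (Jfun r α (sortR u) = [] → ∀ (l : ℕ) (k : Fin l → Fin u.length),
      Function.Injective k → 0 < l →
      ¬ r (sortR (List.ofFn fun i => u.get (k i))) ≤ α) := by
  classical
  have hsortlen : (sortR u).length = m := by
    simp [sortR, List.length_insertionSort, hlen]
  have hsorted_u : (sortR u).Pairwise (· ≤ ·) := List.pairwise_insertionSort _ u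
  have hperm_u : List.Perm (sortR u) u := List.perm_insertionSort _ u
  have hbdd : BddAbove {n | n ≤ (sortR u).length ∧ r ((sortR u).take n) ≤ α} :=
    ⟨(sortR u).length, fun n hn => hn.1⟩
  have key : ∀ (l : ℕ) (k : Fin l → Fin u.length), Function.Injective k →
      r (sortR (List.ofFn fun i => u.get (k i))) ≤ α →
      l ≤ Ifun r α (sortR u) ∧
        ∀ i < l, (sortR u).getD i 0 ≤ (sortR (List.ofFn fun i => u.get (k i))).getD i 0 := by
    intro l k hinj hr
    set u' : List ℝ := List.ofFn fun i => u.get (k i) with hu'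
    have hlm : l ≤ u.length := by
      simpa using Fintype.card_le_of_injective k hinj
    have hu'len : u'.length = l := by simp [hu']
    have hsu'len : (sortR u').length = l := by
      simp [sortR, List.length_insertionSort, hu'len]
    have hperm_u' : List.Perm (sortR u') u' := List.perm_insertionSort _ u'
    have hsorted_u' : (sortR u').Pairwise (· ≤ ·) := List.pairwise_insertionSort _ u'
    -- u' is a subpermutation of u
    have hsub : List.Subperm u' u := by
      have h1 : u' = (List.ofFn k).map u.get := (List.map_ofFn (f := k) (g := u.get)).symm
      have h2 : List.Subperm (List.ofFn k) (List.finRange u.length) :=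
        (List.nodup_ofFn.2 hinj).subperm (fun x _ => List.mem_finRange x)
      have h3 : (List.finRange u.length).map u.get = u := by
        conv_rhs => rw [← List.ofFn_get u]
        rw [List.ofFn_eq_map]
      obtain ⟨l0, hl0p, hl0s⟩ := h2
      have h4 : List.Subperm ((List.ofFn k).map u.get) ((List.finRange u.length).map u.get) :=
        ⟨l0.map u.get, hl0p.map u.get, hl0s.map u.get⟩
      rw [h3] at h4
      rwa [← h1] at h4
    have hsub2 : List.Subperm (sortR u') (sortR u) :=
      (hperm_u'.subperm.trans hsub).trans hperm_u.symm.subperm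
    have hsl : List.Sublist (sortR u') (sortR u) :=
      List.sublist_of_subperm_of_pairwise hsub2 hsorted_u' hsorted_u
    have hpt : ∀ i < l, (sortR u).getD i 0 ≤ (sortR u').getD i 0 := by
      intro i hi
      exact mySortedSublistGetD hsl hsorted_u i (hsu'len ▸ hi)
    refine ⟨?_, hpt⟩
    -- membership of elements
    have hmem_sort : ∀ x ∈ sortR u, x ∈ Set.Icc (0:ℝ) 1 := fun x hx =>
      hmem x (hperm_u.mem_iff.1 hx)
    have hmem_u' : ∀ x ∈ sortR u', x ∈ Set.Icc (0:ℝ) 1 := by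
      intro x hx
      have : x ∈ u' := hperm_u'.mem_iff.1 hx
      rw [hu', List.mem_ofFn] at this
      obtain ⟨i, hi⟩ := this
      have hgm : u.get (k i) ∈ u := u.get_mem _
      exact hi ▸ hmem _ hgm
    -- the truncation
    have htlen : ((sortR u).take l).length = l := by
      rw [List.length_take, hsortlen]
      omega
    have hSo1 : SoMem m ((sortR u).take l) :=
      ⟨by rw [htlen]; omega,
       hsorted_u.sublist (List.take_sublist _ _),
       fun x hx => hmem_sort x (List.take_subset _ _ hx)⟩
    have hSo2 : SoMem m (sortR u') := ⟨by rw [hsu'len]; omega, hsorted_u', hmem_u'⟩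
    have hrt : r ((sortR u).take l) ≤ α := by
      refine le_trans (hEnt _ _ hSo1 hSo2 (by rw [htlen, hsu'len]) ?_) hr
      intro i hi
      rw [htlen] at hi
      have hgd : ((sortR u).take l).getD i 0 = (sortR u).getD i 0 := by
        have hilen : i < (sortR u).length := by omega
        rw [List.getD_eq_getElem _ _ (by rwa [htlen]), List.getD_eq_getElem _ _ hilen]
        simp [List.getElem_take]
      rw [hgd]
      exact hpt i hi
    exact le_csSup hbdd ⟨by rw [hsortlen]; omega, hrt⟩
  constructor
  · intro l k hinj hl hr
    obtain ⟨hlI, hpt⟩ := key l k hinj hr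
    have hlm : l ≤ u.length := by
      simpa using Fintype.card_le_of_injective k hinj
    have hJlen : (Jfun r α (sortR u)).length = min (Ifun r α (sortR u)) m := by
      simp [Jfun, List.length_take, hsortlen]
    have hslen' : (sortR (List.ofFn fun i => u.get (k i))).length = l := by
      simp [sortR, List.length_insertionSort]
    constructor
    · rw [hJlen, hslen']
      omega
    · intro i hi
      rw [hslen'] at hi
      have hiI : i < Ifun r α (sortR u) := lt_of_lt_of_le hi hlI
      have him : i < (sortR u).length := by rw [hsortlen]; omega
      have : (Jfun r α (sortR u)).getD i 0 = (sortR u).getD i 0 := by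
        rw [Jfun, List.getD_eq_getElem _ _ (by rw [List.length_take]; omega),
          List.getD_eq_getElem _ _ him]
        simp [List.getElem_take]
      rw [this]
      exact hpt i hi
  · intro hJ l k hinj hl hr
    obtain ⟨hlI, -⟩ := key l k hinj hr
    have hlm : l ≤ u.length := by
      simpa using Fintype.card_le_of_injective k hinj
    have : (Jfun r α (sortR u)).length = 0 := by rw [hJ]; rfl
    rw [Jfun, List.length_take, hsortlen] at this
    omega
end

section
/- Let r̃ : S_o → ℝ be a symmetric multivariate polynomial functional of the form r̃(u) = Σ_{k=1}^{p} C_{p,k} Σ_{i_1 < ... < i_k} u_{i_1}···u_{i_k} for u of dimension p (and r̃(∅) = 0). If for all p ≥ 1 and all i ∈ {1,...,p}, r̃(u^{i,p−i}) ≤ r̃(u^{i−1,p−i+1}) — where u^{i,p−i} is the p-dimensional vector with first i entries 0 and last p−i entries 1 — then r̃ is entrywise increasing: for same-dimension u, v with u_j ≤ v_j for all j, r̃(u) ≤ r̃(v). -/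
open Finset

/-- The symmetric multivariate polynomial functional
`r̃(u) = Σ_{k=1}^{p} C_{p,k} Σ_{i₁<⋯<i_k} u_{i₁}⋯u_{i_k}` on `p`-dimensional inputs. -/
def rPoly (C : ℕ → ℕ → ℝ) (p : ℕ) (u : Fin p → ℝ) : ℝ :=
  ∑ k ∈ Finset.Icc 1 p, C p k *
    ∑ I ∈ Finset.powersetCard k (Finset.univ : Finset (Fin p)), ∏ i ∈ I, u i

/-- `u^{a,p−a}`: the `p`-dimensional vector whose first `a` entries are `0` and whose
remaining entries are `1`. -/
def stepVec (p a : ℕ) : Fin p → ℝ := fun j => if (j : ℕ) < a then 0 else 1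

/-- Number of coordinates equal to one. -/
noncomputable def onesCount {p : ℕ} (x : Fin p → ℝ) : ℕ :=
  (univ.filter (fun j => x j = 1)).card

lemma vertex_val (C : ℕ → ℕ → ℝ) {p : ℕ} (x : Fin p → ℝ)
    (hx : ∀ j, x j = 0 ∨ x j = 1) :
    rPoly C p x = ∑ k ∈ Finset.Icc 1 p, C p k * ((onesCount x).choose k : ℝ) := by
  unfold rPoly onesCount
  refine Finset.sum_congr rfl fun k _ => ?_
  congr 1
  set T := univ.filter (fun j => x j = 1) with hT
  have hprod : ∀ I ∈ Finset.powersetCard k (univ : Finset (Fin p)),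
      ∏ i ∈ I, x i = if I ⊆ T then (1:ℝ) else 0 := by
    intro I _
    split_ifs with hsub
    · exact Finset.prod_eq_one fun i hi => (Finset.mem_filter.mp (hsub hi)).2
    · obtain ⟨i, hiI, hiT⟩ := Finset.not_subset.mp hsub
      refine Finset.prod_eq_zero hiI ?_
      rcases hx i with h0 | h1
      · exact h0
      · exact absurd (Finset.mem_filter.mpr ⟨Finset.mem_univ i, h1⟩) hiT
  rw [Finset.sum_congr rfl hprod, Finset.sum_ite, Finset.sum_const_zero,
    Finset.sum_const, add_zero, nsmul_eq_mul, mul_one]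
  have : (Finset.powersetCard k (univ : Finset (Fin p))).filter (fun I => I ⊆ T)
      = Finset.powersetCard k T := by
    ext I; simp [Finset.mem_powersetCard]; tauto
  rw [this, Finset.card_powersetCard]

lemma stepVec_vertex (p a : ℕ) : ∀ j, stepVec p a j = 0 ∨ stepVec p a j = 1 := by
  intro j; unfold stepVec; split_ifs <;> simp

lemma onesCount_stepVec (p a : ℕ) : onesCount (stepVec p a) = p - a := by
  unfold onesCount stepVec
  have : (univ.filter (fun j : Fin p => (if (j:ℕ) < a then (0:ℝ) else 1) = 1))
      = univ.filter (fun j : Fin p => a ≤ (j:ℕ)) := by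
    ext j; simp only [Finset.mem_filter]
    constructor
    · rintro ⟨hj, h1⟩
      refine ⟨hj, ?_⟩
      by_contra hc
      rw [if_pos (by omega)] at h1
      norm_num at h1
    · rintro ⟨hj, h1⟩
      rw [if_neg (by omega)]
      exact ⟨hj, rfl⟩
  rw [this, Finset.card_filter,
    Fin.sum_univ_eq_sum_range (fun n => if a ≤ n then (1:ℕ) else 0),
    ← Finset.card_filter]
  have : (Finset.range p).filter (fun n => a ≤ n) = Finset.Ico a p := by
    ext n; simp [Finset.mem_Ico, and_comm]
  rw [this, Nat.card_Ico]

/-- The vertex values `g m := ∑ₖ C p k · C(m,k)` are monotone in the number of ones. -/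
lemma g_mono (C : ℕ → ℕ → ℝ)
    (h : ∀ p, 1 ≤ p → ∀ i, 1 ≤ i → i ≤ p →
      rPoly C p (stepVec p i) ≤ rPoly C p (stepVec p (i - 1)))
    {p m : ℕ} (hm : m < p) :
    ∑ k ∈ Finset.Icc 1 p, C p k * ((m).choose k : ℝ)
      ≤ ∑ k ∈ Finset.Icc 1 p, C p k * ((m + 1).choose k : ℝ) := by
  have hstep := h p (by omega) (p - m) (by omega) (by omega)
  rw [vertex_val C _ (stepVec_vertex p (p - m)),
    vertex_val C _ (stepVec_vertex p (p - m - 1)),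
    onesCount_stepVec, onesCount_stepVec] at hstep
  have e1 : p - (p - m) = m := by omega
  have e2 : p - (p - m - 1) = m + 1 := by omega
  rw [e1, e2] at hstep
  exact hstep

lemma rPoly_update_eq (C : ℕ → ℕ → ℝ) {p : ℕ} (u : Fin p → ℝ) (j : Fin p) (t : ℝ) :
    rPoly C p (Function.update u j t) =
      (∑ k ∈ Finset.Icc 1 p, C p k *
        ∑ I ∈ (Finset.powersetCard k (univ : Finset (Fin p))).filter (fun I => j ∉ I),
          ∏ i ∈ I, u i)
      + t * ∑ k ∈ Finset.Icc 1 p, C p k *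
        ∑ I ∈ (Finset.powersetCard k (univ : Finset (Fin p))).filter (fun I => j ∈ I),
          ∏ i ∈ I.erase j, u i := by
  unfold rPoly
  rw [Finset.mul_sum, ← Finset.sum_add_distrib]
  refine Finset.sum_congr rfl fun k _ => ?_
  rw [← Finset.sum_filter_add_sum_filter_not (Finset.powersetCard k (univ : Finset (Fin p)))
    (fun I => j ∈ I)]
  have h1 : ∀ I ∈ (Finset.powersetCard k (univ : Finset (Fin p))).filter (fun I => j ∈ I),
      ∏ i ∈ I, Function.update u j t i = t * ∏ i ∈ I.erase j, u i := by
    intro I hI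
    have hjI : j ∈ I := (Finset.mem_filter.mp hI).2
    rw [← Finset.prod_erase_mul _ _ hjI, Function.update_self, mul_comm]
    congr 1
    exact Finset.prod_congr rfl fun i hi =>
      Function.update_of_ne (Finset.ne_of_mem_erase hi) _ _
  have h2 : ∀ I ∈ (Finset.powersetCard k (univ : Finset (Fin p))).filter (fun I => j ∉ I),
      ∏ i ∈ I, Function.update u j t i = ∏ i ∈ I, u i := by
    intro I hI
    exact Finset.prod_congr rfl fun i hi =>
      Function.update_of_ne (by rintro rfl; exact (Finset.mem_filter.mp hI).2 hi) _ _
  rw [Finset.sum_congr rfl h1, Finset.sum_congr rfl h2, ← Finset.mul_sum]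
  ring

/-- `rPoly` is affine in each coordinate. -/
lemma rPoly_update_affine (C : ℕ → ℕ → ℝ) {p : ℕ} (u : Fin p → ℝ) (j : Fin p) (t : ℝ) :
    rPoly C p (Function.update u j t) =
      rPoly C p (Function.update u j 0)
        + t * (rPoly C p (Function.update u j 1) - rPoly C p (Function.update u j 0)) := by
  rw [rPoly_update_eq, rPoly_update_eq C u j 0, rPoly_update_eq C u j 1]
  ring

/-- A function that is affine in each coordinate and nonnegative on the vertices of the
cube is nonnegative on the whole cube. -/
lemma cube_nonneg {p : ℕ} (G : (Fin p → ℝ) → ℝ)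
    (hG : ∀ (x : Fin p → ℝ) (j : Fin p), G x =
      (1 - x j) * G (Function.update x j 0) + x j * G (Function.update x j 1))
    (h0 : ∀ x : Fin p → ℝ, (∀ j, x j = 0 ∨ x j = 1) → 0 ≤ G x) :
    ∀ x : Fin p → ℝ, (∀ j, x j ∈ Set.Icc (0:ℝ) 1) → 0 ≤ G x := by
  have H : ∀ S : Finset (Fin p), ∀ x : Fin p → ℝ,
      (∀ j, x j ∈ Set.Icc (0:ℝ) 1) → (∀ j, j ∉ S → x j = 0 ∨ x j = 1) → 0 ≤ G x := by
    intro S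
    induction S using Finset.induction with
    | empty =>
      intro x hx hv
      exact h0 x fun j => hv j (Finset.notMem_empty j)
    | @insert j S hj ih =>
      intro x hx hv
      rw [hG x j]
      have hx0 : ∀ i, Function.update x j 0 i ∈ Set.Icc (0:ℝ) 1 := by
        intro i
        rcases eq_or_ne i j with rfl | hij
        · simp
        · rw [Function.update_of_ne hij]; exact hx i
      have hx1 : ∀ i, Function.update x j 1 i ∈ Set.Icc (0:ℝ) 1 := by
        intro i
        rcases eq_or_ne i j with rfl | hij
        · simp
        · rw [Function.update_of_ne hij]; exact hx i
      have hv0 : ∀ i, i ∉ S → Function.update x j 0 i = 0 ∨ Function.update x j 0 i = 1 := by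
        intro i hi
        rcases eq_or_ne i j with rfl | hij
        · left; simp
        · rw [Function.update_of_ne hij]
          exact hv i (by simp [hij, hi])
      have hv1 : ∀ i, i ∉ S → Function.update x j 1 i = 0 ∨ Function.update x j 1 i = 1 := by
        intro i hi
        rcases eq_or_ne i j with rfl | hij
        · right; simp
        · rw [Function.update_of_ne hij]
          exact hv i (by simp [hij, hi])
      have g0 := ih _ hx0 hv0
      have g1 := ih _ hx1 hv1
      have h1 := (hx j).1
      have h2 := (hx j).2
      have : (0:ℝ) ≤ 1 - x j := by linarith
      positivity
  intro x hx
  exact H univ x hx fun j hj => absurd (Finset.mem_univ j) hj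

lemma onesCount_update {p : ℕ} (x : Fin p → ℝ) (j : Fin p) :
    onesCount (Function.update x j 1) = onesCount (Function.update x j 0) + 1 ∧
      onesCount (Function.update x j 0) < p := by
  set T0 := univ.filter (fun i => Function.update x j 0 i = 1) with hT0
  have hjT0 : j ∉ T0 := by
    simp [hT0, Function.update_self]
  have hT1 : univ.filter (fun i => Function.update x j 1 i = 1) = insert j T0 := by
    ext i
    rcases eq_or_ne i j with rfl | hij
    · simp [Function.update_self]
    · simp [hT0, Function.update_of_ne hij, hij]
  constructor
  · unfold onesCount
    rw [hT1, Finset.card_insert_of_notMem hjT0]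
  · unfold onesCount
    have : T0 ⊆ univ.erase j := fun i hi => Finset.mem_erase.mpr
      ⟨fun hij => hjT0 (hij ▸ hi), Finset.mem_univ i⟩
    calc T0.card ≤ (univ.erase j).card := Finset.card_le_card this
      _ = p - 1 := by rw [Finset.card_erase_of_mem (Finset.mem_univ j), Finset.card_univ,
            Fintype.card_fin]
      _ < p := by have := j.pos; omega

/-- The slope of `rPoly` in coordinate `j` is nonnegative on the cube. -/
lemma slope_nonneg (C : ℕ → ℕ → ℝ)
    (h : ∀ p, 1 ≤ p → ∀ i, 1 ≤ i → i ≤ p →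
      rPoly C p (stepVec p i) ≤ rPoly C p (stepVec p (i - 1)))
    {p : ℕ} (j : Fin p) (x : Fin p → ℝ) (hx : ∀ i, x i ∈ Set.Icc (0:ℝ) 1) :
    0 ≤ rPoly C p (Function.update x j 1) - rPoly C p (Function.update x j 0) := by
  set G : (Fin p → ℝ) → ℝ := fun y =>
    rPoly C p (Function.update y j 1) - rPoly C p (Function.update y j 0) with hGdef
  have hG : ∀ (y : Fin p → ℝ) (i : Fin p), G y =
      (1 - y i) * G (Function.update y i 0) + y i * G (Function.update y i 1) := by
    intro y i
    rcases eq_or_ne i j with rfl | hij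
    · have e0 : Function.update (Function.update y i (0:ℝ)) i (1:ℝ)
          = Function.update y i 1 := Function.update_idem ..
      have e1 : Function.update (Function.update y i (0:ℝ)) i (0:ℝ)
          = Function.update y i 0 := Function.update_idem ..
      have e2 : Function.update (Function.update y i (1:ℝ)) i (1:ℝ)
          = Function.update y i 1 := Function.update_idem ..
      have e3 : Function.update (Function.update y i (1:ℝ)) i (0:ℝ)
          = Function.update y i 0 := Function.update_idem ..
      simp only [hGdef, e0, e1, e2, e3]
      ring
    · have key : ∀ b : ℝ, rPoly C p (Function.update y j b) =
          rPoly C p (Function.update (Function.update y i 0) j b)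
          + y i * (rPoly C p (Function.update (Function.update y i 1) j b)
            - rPoly C p (Function.update (Function.update y i 0) j b)) := by
        intro b
        have comm0 : Function.update (Function.update y i (0:ℝ)) j b
            = Function.update (Function.update y j b) i 0 :=
          Function.update_comm hij.symm .. |>.symm
        have comm1 : Function.update (Function.update y i (1:ℝ)) j b
            = Function.update (Function.update y j b) i 1 :=
          Function.update_comm hij.symm .. |>.symm
        rw [comm0, comm1]
        have self : Function.update y j b =
            Function.update (Function.update y j b) i ((Function.update y j b) i) :=
          (Function.update_eq_self i _).symm
        have val : (Function.update y j b) i = y i := Function.update_of_ne hij _ _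
        calc rPoly C p (Function.update y j b)
            = rPoly C p (Function.update (Function.update y j b) i (y i)) := by
              rw [← val, ← self]
          _ = _ := by rw [rPoly_update_affine]
      simp only [hGdef]
      rw [key 1, key 0]
      ring
  have h0 : ∀ y : Fin p → ℝ, (∀ i, y i = 0 ∨ y i = 1) → 0 ≤ G y := by
    intro y hy
    have hy0 : ∀ i, Function.update y j 0 i = 0 ∨ Function.update y j 0 i = 1 := by
      intro i
      rcases eq_or_ne i j with rfl | hij
      · left; simp
      · rw [Function.update_of_ne hij]; exact hy i
    have hy1 : ∀ i, Function.update y j 1 i = 0 ∨ Function.update y j 1 i = 1 := by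
      intro i
      rcases eq_or_ne i j with rfl | hij
      · right; simp
      · rw [Function.update_of_ne hij]; exact hy i
    obtain ⟨hcard, hlt⟩ := onesCount_update y j
    simp only [hGdef]
    rw [vertex_val C _ hy1, vertex_val C _ hy0, hcard, sub_nonneg]
    exact g_mono C h hlt
  exact cube_nonneg G hG h0 x hx

/-- If for all `p ≥ 1` and all `1 ≤ i ≤ p`,
`r̃(u^{i,p−i}) ≤ r̃(u^{i−1,p−i+1})`, then `r̃` is entrywise increasing: for same-dimension
`u, v` with entries in `[0,1]` and `u_j ≤ v_j` for all `j`, `r̃(u) ≤ r̃(v)`. -/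
theorem rPoly_entrywise_increasing (C : ℕ → ℕ → ℝ)
    (h : ∀ p, 1 ≤ p → ∀ i, 1 ≤ i → i ≤ p →
      rPoly C p (stepVec p i) ≤ rPoly C p (stepVec p (i - 1))) :
    ∀ (p : ℕ) (u v : Fin p → ℝ), (∀ j, u j ∈ Set.Icc (0 : ℝ) 1) →
      (∀ j, v j ∈ Set.Icc (0 : ℝ) 1) → (∀ j, u j ≤ v j) →
      rPoly C p u ≤ rPoly C p v := by
  intro p u v hu hv huv
  have key : ∀ S : Finset (Fin p),
      rPoly C p u ≤ rPoly C p (fun i => if i ∈ S then v i else u i) := by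
    intro S
    induction S using Finset.induction with
    | empty => simp
    | @insert j S hjS ih =>
      set w : Fin p → ℝ := fun i => if i ∈ S then v i else u i with hw
      have hwc : ∀ i, w i ∈ Set.Icc (0:ℝ) 1 := by
        intro i
        by_cases hi : i ∈ S <;> simp only [hw, hi, if_true, if_false]
        · exact hv i
        · exact hu i
      have e0 : (fun i => if i ∈ insert j S then v i else u i) = Function.update w j (v j) := by
        funext i
        rcases eq_or_ne i j with rfl | hij
        · simp [Function.update_self]
        · rw [Function.update_of_ne hij]
          simp [hw, hij]
      have e1 : w = Function.update w j (u j) := by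
        have : w j = u j := by simp [hw, hjS]
        rw [← this, Function.update_eq_self]
      have hB := slope_nonneg C h j w hwc
      have haff_u := rPoly_update_affine C w j (u j)
      have haff_v := rPoly_update_affine C w j (v j)
      have hstep : rPoly C p (Function.update w j (u j))
          ≤ rPoly C p (Function.update w j (v j)) := by
        rw [haff_u, haff_v]
        have := huv j
        nlinarith
      calc rPoly C p u ≤ rPoly C p w := ih
        _ = rPoly C p (Function.update w j (u j)) := by rw [← e1]
        _ ≤ rPoly C p (Function.update w j (v j)) := hstep
        _ = _ := by rw [e0]
  have := key univ
  simpa using this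
end

section
/- Let S_0 ⊆ {1,...,K} be nonempty, w : S_0 → [0,1], m ≥ 1, and define r(S) = 1 − Σ_{l=0}^{m−1} Σ_{I⊆S, |I|=l} (Π_{q∈I} w_q)(Π_{k∈S∖I}(1−w_k)) for S ⊆ S_0 (with r(∅) = 0). If S ⊆ S_0, i ∈ S, j ∈ S_0 ∖ S, and w_i ≥ w_j, then r(S) ≥ r((S∖{i}) ∪ {j}). That is, the GLFWER risk does not increase when a kept index with larger weight is exchanged for one with smaller weight. -/
open Finset

private lemma glfwer_aux_succ {α : Type*} [DecidableEq α] (w : α → ℝ) (T : Finset α)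
    (x : α) (hx : x ∉ T) (l : ℕ) :
    ∑ I ∈ Finset.powersetCard (l+1) (insert x T),
        (∏ q ∈ I, w q) * ∏ k ∈ insert x T \ I, (1 - w k)
      = (1 - w x) * (∑ I ∈ Finset.powersetCard (l+1) T,
            (∏ q ∈ I, w q) * ∏ k ∈ T \ I, (1 - w k))
        + w x * (∑ I ∈ Finset.powersetCard l T,
            (∏ q ∈ I, w q) * ∏ k ∈ T \ I, (1 - w k)) := by
  rw [Finset.powersetCard_succ_insert hx]
  rw [Finset.sum_union]
  · congr 1
    · rw [Finset.mul_sum]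
      refine Finset.sum_congr rfl fun I hI => ?_
      have hIT : I ⊆ T := Finset.mem_powersetCard.1 hI |>.1
      have hxI : x ∉ I := fun h => hx (hIT h)
      have hdiff : insert x T \ I = insert x (T \ I) := by
        ext k; simp only [Finset.mem_sdiff, Finset.mem_insert]
        constructor
        · rintro ⟨h1 | h1, h2⟩ <;> tauto
        · rintro (rfl | ⟨h1, h2⟩) <;> tauto
      rw [hdiff, Finset.prod_insert (fun h => (Finset.mem_sdiff.1 h).1 |> hx)]
      ring
    · rw [Finset.sum_image, Finset.mul_sum]
      · refine Finset.sum_congr rfl fun J hJ => ?_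
        have hJT : J ⊆ T := Finset.mem_powersetCard.1 hJ |>.1
        have hxJ : x ∉ J := fun h => hx (hJT h)
        have hdiff : insert x T \ insert x J = T \ J := by
          ext k; simp only [Finset.mem_sdiff, Finset.mem_insert]
          constructor
          · rintro ⟨h1 | h1, h2⟩
            · exact absurd (Or.inl h1) h2
            · exact ⟨h1, fun h => h2 (Or.inr h)⟩
          · rintro ⟨h1, h2⟩
            exact ⟨Or.inr h1, fun h => h.elim (fun h' => hx (h' ▸ h1)) h2⟩
        rw [hdiff, Finset.prod_insert hxJ]
        ring
      · intro a ha b hb hab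
        have hxa : x ∉ a := fun h => hx ((Finset.mem_powersetCard.1 ha).1 h)
        have hxb : x ∉ b := fun h => hx ((Finset.mem_powersetCard.1 hb).1 h)
        rw [← Finset.erase_insert hxa, ← Finset.erase_insert hxb, hab]
  · rw [Finset.disjoint_left]
    intro I hI hI'
    have hxI : x ∉ I := fun h => hx ((Finset.mem_powersetCard.1 hI).1 h)
    obtain ⟨J, _, rfl⟩ := Finset.mem_image.1 hI'
    exact hxI (Finset.mem_insert_self x J)

private lemma glfwer_aux {α : Type*} [DecidableEq α] (w : α → ℝ) (T : Finset α)
    (x : α) (hx : x ∉ T) (n : ℕ) :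
    ∑ l ∈ Finset.range (n+1), ∑ I ∈ Finset.powersetCard l (insert x T),
        (∏ q ∈ I, w q) * ∏ k ∈ insert x T \ I, (1 - w k)
      = (1 - w x) * (∑ l ∈ Finset.range (n+1), ∑ I ∈ Finset.powersetCard l T,
            (∏ q ∈ I, w q) * ∏ k ∈ T \ I, (1 - w k))
        + w x * (∑ l ∈ Finset.range n, ∑ I ∈ Finset.powersetCard l T,
            (∏ q ∈ I, w q) * ∏ k ∈ T \ I, (1 - w k)) := by
  rw [Finset.sum_range_succ' _ n, Finset.sum_range_succ' (fun l => ∑ I ∈ Finset.powersetCard l T,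
      (∏ q ∈ I, w q) * ∏ k ∈ T \ I, (1 - w k)) n]
  have h0 : ∑ I ∈ Finset.powersetCard 0 (insert x T),
      (∏ q ∈ I, w q) * ∏ k ∈ insert x T \ I, (1 - w k)
      = (1 - w x) * ∑ I ∈ Finset.powersetCard 0 T,
          (∏ q ∈ I, w q) * ∏ k ∈ T \ I, (1 - w k) := by
    simp [Finset.prod_insert hx]
  rw [h0]
  have hs : ∀ l ∈ Finset.range n, ∑ I ∈ Finset.powersetCard (l+1) (insert x T),
      (∏ q ∈ I, w q) * ∏ k ∈ insert x T \ I, (1 - w k)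
      = (1 - w x) * (∑ I ∈ Finset.powersetCard (l+1) T,
            (∏ q ∈ I, w q) * ∏ k ∈ T \ I, (1 - w k))
        + w x * (∑ I ∈ Finset.powersetCard l T,
            (∏ q ∈ I, w q) * ∏ k ∈ T \ I, (1 - w k)) := fun l _ =>
    glfwer_aux_succ w T x hx l
  rw [Finset.sum_congr rfl hs, Finset.sum_add_distrib, ← Finset.mul_sum, ← Finset.mul_sum]
  ring

/-- Let `S₀ ⊆ {1,…,K}` be nonempty, `w : S₀ → [0,1]`, `m ≥ 1`, and define
the GLFWER risk `r(S) = 1 − Σ_{l<m} Σ_{I⊆S, |I|=l} (Π_{q∈I} w_q)(Π_{k∈S∖I}(1−w_k))`.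
If `S ⊆ S₀`, `i ∈ S`, `j ∈ S₀ ∖ S`, and `w_i ≥ w_j`, then `r(S) ≥ r((S∖{i}) ∪ {j})`:
the GLFWER risk does not increase when a kept index with larger weight is exchanged for one
with smaller weight. -/
theorem glfwer_swap_le (K m : ℕ) (hm : 1 ≤ m) (S₀ : Finset (Fin K)) (hS₀ : S₀.Nonempty)
    (w : Fin K → ℝ) (hw : ∀ k ∈ S₀, w k ∈ Set.Icc (0 : ℝ) 1)
    (S : Finset (Fin K)) (hS : S ⊆ S₀) (i j : Fin K)
    (hi : i ∈ S) (hj : j ∈ S₀ \ S) (hij : w j ≤ w i) :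
    1 - ∑ l ∈ Finset.range m, ∑ I ∈ Finset.powersetCard l (insert j (S.erase i)),
        (∏ q ∈ I, w q) * ∏ k ∈ (insert j (S.erase i)) \ I, (1 - w k)
      ≤ 1 - ∑ l ∈ Finset.range m, ∑ I ∈ Finset.powersetCard l S,
        (∏ q ∈ I, w q) * ∏ k ∈ S \ I, (1 - w k) := by
  obtain ⟨n, rfl⟩ : ∃ n, m = n + 1 := ⟨m - 1, (Nat.succ_pred_eq_of_pos hm).symm⟩
  set T := S.erase i with hT
  have hiT : i ∉ T := Finset.notMem_erase i S
  have hjT : j ∉ T := fun h => (Finset.mem_sdiff.1 hj).2 (Finset.erase_subset i S h)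
  have hSins : S = insert i T := (Finset.insert_erase hi).symm
  rw [hSins, glfwer_aux w T i hiT n, glfwer_aux w T j hjT n]
  set A := ∑ l ∈ Finset.range (n+1), ∑ I ∈ Finset.powersetCard l T,
      (∏ q ∈ I, w q) * ∏ k ∈ T \ I, (1 - w k) with hA
  set B := ∑ l ∈ Finset.range n, ∑ I ∈ Finset.powersetCard l T,
      (∏ q ∈ I, w q) * ∏ k ∈ T \ I, (1 - w k) with hB
  have hAB : B ≤ A := by
    rw [hA, Finset.sum_range_succ]
    have : 0 ≤ ∑ I ∈ Finset.powersetCard n T,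
        (∏ q ∈ I, w q) * ∏ k ∈ T \ I, (1 - w k) := by
      refine Finset.sum_nonneg fun I hI => ?_
      have hIT : I ⊆ T := Finset.mem_powersetCard.1 hI |>.1
      have hTS : T ⊆ S₀ := (Finset.erase_subset i S).trans hS
      refine mul_nonneg (Finset.prod_nonneg fun q hq => (hw q (hTS (hIT hq))).1)
        (Finset.prod_nonneg fun k hk => ?_)
      have := (hw k (hTS (Finset.mem_sdiff.1 hk).1)).2
      linarith
    linarith
  nlinarith [hij, hAB]
end
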